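/- The assignment that maps t_{ij} to X_{ij} for 1 ≤ i ≤ j ≤ n defines a surjective Lie algebra homomorphism from the framed Drinfeld–Kohno Lie algebra 𝔣𝔱ₙ to the framed sphere braid Lie algebra 𝔣𝔅_{n+1}. -/

import Mathlib

open FreeLieAlgebra

/-- Defining relations of the framed Drinfeld–Kohno Lie algebra 𝔣𝔱ₙ, with generators
`t i j` for `1 ≤ i, j ≤ n` (generators out of range are set to zero). -/
def ftRels (k : Type) [Field k] (n : ℕ) : Set (FreeLieAlgebra k (ℕ × ℕ)) :=
  { x | (∃ i j : ℕ, x = of k (i, j) - of k (j, i)) ∨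
        (∃ i j : ℕ, ¬(1 ≤ i ∧ i ≤ n ∧ 1 ≤ j ∧ j ≤ n) ∧ x = of k (i, j)) ∨
        (∃ i j l m : ℕ, i ≠ l ∧ i ≠ m ∧ j ≠ l ∧ j ≠ m ∧ x = ⁅of k (i, j), of k (l, m)⁆) ∨
        (∃ i j l : ℕ, i ≠ j ∧ j ≠ l ∧ i ≠ l ∧ x = ⁅of k (i, j), of k (l, i) + of k (l, j)⁆) ∨
        (∃ i j l : ℕ, x = ⁅of k (i, i), of k (j, l)⁆) }

noncomputable def ftIdeal (k : Type) [Field k] (n : ℕ) : LieIdeal k (FreeLieAlgebra k (ℕ × ℕ)) :=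
  LieSubmodule.lieSpan k _ (ftRels k n)

/-- The framed Drinfeld–Kohno Lie algebra 𝔣𝔱ₙ. -/
abbrev ft (k : Type) [Field k] (n : ℕ) := FreeLieAlgebra k (ℕ × ℕ) ⧸ ftIdeal k n

noncomputable def ftGen (k : Type) [Field k] (n : ℕ) (i j : ℕ) : ft k n :=
  LieSubmodule.Quotient.mk' (ftIdeal k n) (of k (i, j))

/-- Defining relations of the framed sphere braid Lie algebra 𝔣𝔅ₘ: the same relations as
for 𝔣𝔱ₘ together with the residue relations `Σ_{j=1}^m X_{ij} = 0` for each `1 ≤ i ≤ m`. -/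
def fBRels (k : Type) [Field k] (m : ℕ) : Set (FreeLieAlgebra k (ℕ × ℕ)) :=
  ftRels k m ∪ { x | ∃ i : ℕ, 1 ≤ i ∧ i ≤ m ∧ x = ∑ j ∈ Finset.Icc 1 m, of k (i, j) }

noncomputable def fBIdeal (k : Type) [Field k] (m : ℕ) : LieIdeal k (FreeLieAlgebra k (ℕ × ℕ)) :=
  LieSubmodule.lieSpan k _ (fBRels k m)

/-- The framed sphere braid Lie algebra 𝔣𝔅ₘ. -/
abbrev fB (k : Type) [Field k] (m : ℕ) := FreeLieAlgebra k (ℕ × ℕ) ⧸ fBIdeal k m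

noncomputable def fBGen (k : Type) [Field k] (m : ℕ) (i j : ℕ) : fB k m :=
  LieSubmodule.Quotient.mk' (fBIdeal k m) (of k (i, j))

variable {k L L' : Type*} [CommRing k] [LieRing L] [LieAlgebra k L]
  [LieRing L'] [LieAlgebra k L']

/-- The quotient map `L → L ⧸ I` as a Lie algebra homomorphism. -/
def myMkLie (I : LieIdeal k L) : L →ₗ⁅k⁆ L ⧸ I :=
  { (I : Submodule k L).mkQ with
    map_lie' := fun {_ _} => rfl }

@[simp] lemma myMkLie_apply (I : LieIdeal k L) (x : L) :
    myMkLie I x = LieSubmodule.Quotient.mk' I x := rfl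

/-- Lift of a Lie algebra hom through a quotient by an ideal contained in its kernel. -/
noncomputable def myLift (I : LieIdeal k L) (φ : L →ₗ⁅k⁆ L')
    (h : ∀ x ∈ I, φ x = 0) : (L ⧸ I) →ₗ⁅k⁆ L' :=
  { Submodule.liftQ (I : Submodule k L) φ.toLinearMap h with
    map_lie' := by
      rintro x y
      induction x using Quotient.inductionOn' with
      | h x =>
      induction y using Quotient.inductionOn' with
      | h y =>
      show Submodule.liftQ _ _ _ ⁅LieSubmodule.Quotient.mk' I x, LieSubmodule.Quotient.mk' I y⁆ = _
      rw [show (⁅LieSubmodule.Quotient.mk' I x, LieSubmodule.Quotient.mk' I y⁆ : L ⧸ I) =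
          LieSubmodule.Quotient.mk' I ⁅x, y⁆ from (LieSubmodule.Quotient.mk_bracket I x y).symm]
      exact φ.map_lie x y }

@[simp] lemma myLift_mk (I : LieIdeal k L) (φ : L →ₗ⁅k⁆ L') (h) (x : L) :
    myLift I φ h (LieSubmodule.Quotient.mk' I x) = φ x := rfl
section fBLemmas
variable (k : Type) [Field k] (m : ℕ)

lemma fBGen_eq (i j : ℕ) : fBGen k m i j = myMkLie (fBIdeal k m) (of k (i, j)) := rfl

lemma fB_rel_zero {x : FreeLieAlgebra k (ℕ × ℕ)} (h : x ∈ fBRels k m) :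
    myMkLie (fBIdeal k m) x = 0 :=
  (LieSubmodule.Quotient.mk_eq_zero _).2 (LieSubmodule.subset_lieSpan h)

lemma fBGen_symm (i j : ℕ) : fBGen k m i j = fBGen k m j i := by
  have := fB_rel_zero k m (x := of k (i, j) - of k (j, i))
    (Or.inl (Or.inl ⟨i, j, rfl⟩))
  rw [map_sub] at this
  exact sub_eq_zero.1 this

lemma fBGen_out {i j : ℕ} (h : ¬(1 ≤ i ∧ i ≤ m ∧ 1 ≤ j ∧ j ≤ m)) : fBGen k m i j = 0 :=
  fB_rel_zero k m (Or.inl (Or.inr (Or.inl ⟨i, j, h, rfl⟩)))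

lemma fBGen_disjoint {i j l p : ℕ} (h1 : i ≠ l) (h2 : i ≠ p) (h3 : j ≠ l) (h4 : j ≠ p) :
    ⁅fBGen k m i j, fBGen k m l p⁆ = 0 := by
  have := fB_rel_zero k m (x := ⁅of k (i, j), of k (l, p)⁆)
    (Or.inl (Or.inr (Or.inr (Or.inl ⟨i, j, l, p, h1, h2, h3, h4, rfl⟩))))
  rwa [LieHom.map_lie] at this

lemma fBGen_rel4 {i j l : ℕ} (h1 : i ≠ j) (h2 : j ≠ l) (h3 : i ≠ l) :
    ⁅fBGen k m i j, fBGen k m l i + fBGen k m l j⁆ = 0 := by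
  have := fB_rel_zero k m (x := ⁅of k (i, j), of k (l, i) + of k (l, j)⁆)
    (Or.inl (Or.inr (Or.inr (Or.inr (Or.inl ⟨i, j, l, h1, h2, h3, rfl⟩)))))
  rwa [LieHom.map_lie, map_add] at this

lemma fBGen_diag (i j l : ℕ) : ⁅fBGen k m i i, fBGen k m j l⁆ = 0 := by
  have := fB_rel_zero k m (x := ⁅of k (i, i), of k (j, l)⁆)
    (Or.inl (Or.inr (Or.inr (Or.inr (Or.inr ⟨i, j, l, rfl⟩)))))
  rwa [LieHom.map_lie] at this

lemma fBGen_residue {i : ℕ} (h1 : 1 ≤ i) (h2 : i ≤ m) :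
    ∑ j ∈ Finset.Icc 1 m, fBGen k m i j = 0 := by
  have := fB_rel_zero k m (x := ∑ j ∈ Finset.Icc 1 m, of k (i, j))
    (Or.inr ⟨i, h1, h2, rfl⟩)
  rwa [show (myMkLie (fBIdeal k m)) (∑ j ∈ Finset.Icc 1 m, of k (i, j)) = ∑ j ∈ Finset.Icc 1 m, myMkLie (fBIdeal k m) (of k (i, j)) from map_sum ((myMkLie (fBIdeal k m)).toLinearMap) _ _] at this

end fBLemmas

section Main
variable {k : Type} [Field k] {n : ℕ}

lemma lieHom_neg {L L' : Type*} [LieRing L] [LieAlgebra k L] [LieRing L'] [LieAlgebra k L']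
    (f : L →ₗ⁅k⁆ L') (x : L) : f (-x) = -f x := f.toLinearMap.map_neg x

lemma lieHom_sum {L L' ι : Type*} [LieRing L] [LieAlgebra k L] [LieRing L'] [LieAlgebra k L']
    (f : L →ₗ⁅k⁆ L') (s : Finset ι) (g : ι → L) :
    f (∑ i ∈ s, g i) = ∑ i ∈ s, f (g i) := map_sum f.toLinearMap g s

variable (k n) in
/-- Images of the generators: `t_{ij} ↦ X_{ij}` in range, `0` otherwise. -/
noncomputable def fmap : ℕ × ℕ → fB k (n + 1) := fun p =>
  if 1 ≤ p.1 ∧ p.1 ≤ n ∧ 1 ≤ p.2 ∧ p.2 ≤ n then fBGen k (n + 1) p.1 p.2 else 0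

variable (k n) in
noncomputable def phi : FreeLieAlgebra k (ℕ × ℕ) →ₗ⁅k⁆ fB k (n + 1) :=
  FreeLieAlgebra.lift k (fmap k n)

lemma phi_of (i j : ℕ) :
    phi k n (of k (i, j)) =
      if 1 ≤ i ∧ i ≤ n ∧ 1 ≤ j ∧ j ≤ n then fBGen k (n + 1) i j else 0 :=
  FreeLieAlgebra.lift_of_apply (fmap k n) (i, j)

lemma phi_rels : ∀ x ∈ ftRels k n, phi k n x = 0 := by
  rintro x (⟨i, j, rfl⟩ | ⟨i, j, h, rfl⟩ | ⟨i, j, l, p, h1, h2, h3, h4, rfl⟩ |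
    ⟨i, j, l, h1, h2, h3, rfl⟩ | ⟨i, j, l, rfl⟩)
  · rw [map_sub, phi_of, phi_of]
    split_ifs with ha hb hb
    · exact sub_eq_zero.2 (fBGen_symm k (n + 1) i j)
    · exact absurd ⟨ha.2.2.1, ha.2.2.2, ha.1, ha.2.1⟩ hb
    · exact absurd ⟨hb.2.2.1, hb.2.2.2, hb.1, hb.2.1⟩ ha
    · simp
  · rw [phi_of, if_neg h]
  · rw [LieHom.map_lie, phi_of, phi_of]
    split_ifs
    · exact fBGen_disjoint k (n + 1) h1 h2 h3 h4
    · exact lie_zero _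
    · exact zero_lie _
    · exact zero_lie _
  · rw [LieHom.map_lie, map_add, phi_of, phi_of, phi_of]
    by_cases hij : 1 ≤ i ∧ i ≤ n ∧ 1 ≤ j ∧ j ≤ n
    · by_cases hl : 1 ≤ l ∧ l ≤ n
      · rw [if_pos hij, if_pos ⟨hl.1, hl.2, hij.1, hij.2.1⟩,
          if_pos ⟨hl.1, hl.2, hij.2.2.1, hij.2.2.2⟩]
        exact fBGen_rel4 k (n + 1) h1 h2 h3
      · rw [if_pos hij, if_neg (fun hc => hl ⟨hc.1, hc.2.1⟩),
          if_neg (fun hc => hl ⟨hc.1, hc.2.1⟩)]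
        simp
    · rw [if_neg hij]; exact zero_lie _
  · rw [LieHom.map_lie, phi_of, phi_of]
    split_ifs
    · exact fBGen_diag k (n + 1) i j l
    · exact lie_zero _
    · exact zero_lie _
    · exact zero_lie _

lemma phi_ideal : ∀ x ∈ ftIdeal k n, phi k n x = 0 := by
  intro x hx
  have hle : ftIdeal k n ≤ (phi k n).ker :=
    LieSubmodule.lieSpan_le.2 (fun y hy => LieHom.mem_ker.2 (phi_rels y hy))
  exact LieHom.mem_ker.1 (hle hx)

variable (k n) in
noncomputable def piHom : ft k n →ₗ⁅k⁆ fB k (n + 1) :=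
  myLift (ftIdeal k n) (phi k n) phi_ideal

lemma piHom_gen (i j : ℕ) :
    piHom k n (ftGen k n i j) =
      if 1 ≤ i ∧ i ≤ n ∧ 1 ≤ j ∧ j ≤ n then fBGen k (n + 1) i j else 0 :=
  phi_of i j

lemma fB_top {i : ℕ} (h1 : 1 ≤ i) (h2 : i ≤ n + 1) :
    fBGen k (n + 1) i (n + 1) = -∑ l ∈ Finset.Icc 1 n, fBGen k (n + 1) i l := by
  have h := fBGen_residue k (n + 1) h1 h2
  rw [Finset.sum_Icc_succ_top (by omega : 1 ≤ n + 1)] at h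
  exact eq_neg_of_add_eq_zero_right h

variable (k n) in
/-- A set-theoretic section of the projection on the generators. -/
noncomputable def sMap : ℕ × ℕ → ft k n := fun p =>
  if 1 ≤ p.1 ∧ p.1 ≤ n ∧ 1 ≤ p.2 ∧ p.2 ≤ n then ftGen k n p.1 p.2
  else if 1 ≤ p.1 ∧ p.1 ≤ n ∧ p.2 = n + 1 then -∑ l ∈ Finset.Icc 1 n, ftGen k n p.1 l
  else if p.1 = n + 1 ∧ 1 ≤ p.2 ∧ p.2 ≤ n then -∑ l ∈ Finset.Icc 1 n, ftGen k n p.2 l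
  else if p.1 = n + 1 ∧ p.2 = n + 1 then
    ∑ l ∈ Finset.Icc 1 n, ∑ q ∈ Finset.Icc 1 n, ftGen k n l q
  else 0

lemma pi_sum {i : ℕ} (hi : 1 ≤ i) (hin : i ≤ n) :
    piHom k n (-∑ l ∈ Finset.Icc 1 n, ftGen k n i l) = fBGen k (n + 1) i (n + 1) := by
  rw [lieHom_neg, lieHom_sum, fB_top hi (by omega)]
  congr 1
  refine Finset.sum_congr rfl fun l hl => ?_
  rw [Finset.mem_Icc] at hl
  rw [piHom_gen, if_pos ⟨hi, hin, hl.1, hl.2⟩]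

lemma pi_sMap (p : ℕ × ℕ) :
    piHom k n (sMap k n p) = fBGen k (n + 1) p.1 p.2 := by
  obtain ⟨i, j⟩ := p
  show piHom k n (sMap k n (i, j)) = fBGen k (n + 1) i j
  unfold sMap
  by_cases h1 : 1 ≤ i ∧ i ≤ n ∧ 1 ≤ j ∧ j ≤ n
  · rw [if_pos h1, piHom_gen, if_pos h1]
  rw [if_neg h1]
  by_cases h2 : 1 ≤ i ∧ i ≤ n ∧ j = n + 1
  · obtain ⟨hi1, hi2, rfl⟩ := h2
    rw [if_pos ⟨hi1, hi2, rfl⟩]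
    exact pi_sum hi1 hi2
  rw [if_neg h2]
  by_cases h3 : i = n + 1 ∧ 1 ≤ j ∧ j ≤ n
  · obtain ⟨rfl, hj1, hj2⟩ := h3
    rw [if_pos ⟨rfl, hj1, hj2⟩]
    exact (pi_sum hj1 hj2).trans (fBGen_symm k (n + 1) j (n + 1))
  rw [if_neg h3]
  by_cases h4 : i = n + 1 ∧ j = n + 1
  · obtain ⟨rfl, rfl⟩ := h4
    rw [if_pos ⟨rfl, rfl⟩]
    have lhs : piHom k n (∑ l ∈ Finset.Icc 1 n, ∑ q ∈ Finset.Icc 1 n, ftGen k n l q) =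
        ∑ l ∈ Finset.Icc 1 n, ∑ q ∈ Finset.Icc 1 n, fBGen k (n + 1) l q := by
      rw [lieHom_sum]
      refine Finset.sum_congr rfl fun l hl => ?_
      rw [Finset.mem_Icc] at hl
      rw [lieHom_sum]
      refine Finset.sum_congr rfl fun q hq => ?_
      rw [Finset.mem_Icc] at hq
      rw [piHom_gen, if_pos ⟨hl.1, hl.2, hq.1, hq.2⟩]
    have rhs : fBGen k (n + 1) (n + 1) (n + 1) =
        ∑ l ∈ Finset.Icc 1 n, ∑ q ∈ Finset.Icc 1 n, fBGen k (n + 1) l q := by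
      rw [fB_top (by omega) (le_refl _)]
      rw [Finset.sum_congr rfl fun l _ => fBGen_symm k (n + 1) (n + 1) l]
      rw [Finset.sum_congr rfl fun l hl =>
        fB_top (Finset.mem_Icc.1 hl).1 (le_trans (Finset.mem_Icc.1 hl).2 (by omega))]
      rw [Finset.sum_neg_distrib, neg_neg]
    rw [lhs, rhs]
  rw [if_neg h4]
  rw [fBGen_out k (n + 1) (by omega)]
  exact (piHom k n).map_zero

theorem ft_to_sphereBraid_surjective
    (k : Type) [Field k] [CharZero k] (n : ℕ) (hn : 1 ≤ n) :
    ∃ π : ft k n →ₗ⁅k⁆ fB k (n + 1),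
      Function.Surjective π ∧
      ∀ i j : ℕ, 1 ≤ i → i ≤ n → 1 ≤ j → j ≤ n →
        π (ftGen k n i j) = fBGen k (n + 1) i j := by
  refine ⟨piHom k n, ?_, ?_⟩
  · set σ : FreeLieAlgebra k (ℕ × ℕ) →ₗ⁅k⁆ ft k n := FreeLieAlgebra.lift k (sMap k n) with hσ
    have key : (piHom k n).comp σ = myMkLie (fBIdeal k (n + 1)) := by
      apply FreeLieAlgebra.hom_ext
      intro p
      rw [LieHom.comp_apply, hσ, FreeLieAlgebra.lift_of_apply]
      exact (pi_sMap p).trans rfl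
    intro y
    obtain ⟨x, hx⟩ : ∃ x, myMkLie (fBIdeal k (n + 1)) x = y :=
      Quot.mk_surjective y
    exact ⟨σ x, by rw [← LieHom.comp_apply, key, hx]⟩
  · intro i j hi1 hi2 hj1 hj2
    rw [piHom_gen, if_pos ⟨hi1, hi2, hj1, hj2⟩]

end Main
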